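/- arXiv:1112.2540 — 5 statements merged into one kernel-verified Lean document; each statement's English description precedes it below -/
import Mathlib

section
/- For α ∈ (0,1) and k ∈ ℕ with sin(πk·α) ≠ 0, the function f(y) = sin(yα)·sin(y(1-α))/sin(y) is strictly increasing on the interval (πk, π(k+1)). -/
/-!
With `u = yα` and `v = y(1 - α)` we have `u + v = y`, and expanding `sin y` and `cos y` by the
addition formulas turns the numerator of `f'(y)` into the sum of squares
`α (cos u sin v)² + (1 - α) (sin u cos v)² + (sin u sin v)²`. Its first two terms cannot both
vanish because `sin u cos v + cos u sin v = sin y ≠ 0`, so `f' > 0` wherever `sin y ≠ 0`.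
-/

open Real

lemma Real.sin_ne_zero_of_mem_Ioo_int_mul_pi (k : ℤ) {y : ℝ}
    (hy : y ∈ Set.Ioo (π * k) (π * (k + 1))) : sin y ≠ 0 := by
  refine sin_ne_zero_iff.mpr fun n hn => ?_
  subst hn
  have hkn : (k : ℝ) < n := by nlinarith [hy.1, pi_pos]
  have hnk : (n : ℝ) < k + 1 := by nlinarith [hy.2, pi_pos]
  norm_cast at hkn hnk
  omega

lemma weighted_sq_add_sq_pos {α x w : ℝ} (hα : α ∈ Set.Ioo (0 : ℝ) 1) (hxw : x + w ≠ 0) :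
    0 < α * w ^ 2 + (1 - α) * x ^ 2 := by
  obtain ⟨hα0, hα1⟩ := hα
  by_cases hx : x = 0
  · have hw : w ≠ 0 := by simpa [hx] using hxw
    have := mul_pos hα0 (sq_pos_of_ne_zero hw)
    nlinarith [sq_nonneg x]
  · have := mul_pos (sub_pos.mpr hα1) (sq_pos_of_ne_zero hx)
    nlinarith [sq_nonneg w]

lemma hasDerivAt_sin_mul_sin_one_sub_div_sin (α : ℝ) {y : ℝ} (hy : sin y ≠ 0) :
    HasDerivAt (fun y => sin (y * α) * sin (y * (1 - α)) / sin y)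
      ((α * (cos (y * α) * sin (y * (1 - α))) ^ 2
          + (1 - α) * (sin (y * α) * cos (y * (1 - α))) ^ 2
          + (sin (y * α) * sin (y * (1 - α))) ^ 2) / sin y ^ 2) y := by
  have hu : HasDerivAt (fun y => sin (y * α)) (cos (y * α) * α) y :=
    ((hasDerivAt_id y).mul_const α).sin.congr_deriv (by simp)
  have hv : HasDerivAt (fun y => sin (y * (1 - α))) (cos (y * (1 - α)) * (1 - α)) y :=
    ((hasDerivAt_id y).mul_const (1 - α)).sin.congr_deriv (by simp)
  refine ((hu.mul hv).div (hasDerivAt_sin y) hy).congr_deriv ?_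
  have hy_split : y = y * α + y * (1 - α) := by ring
  congr 1
  simp only [Pi.mul_apply]
  rw [hy_split, sin_add, cos_add, ← hy_split]
  ring

theorem strictMonoOn_sin_mul_sin_one_sub_div_sin {α : ℝ} (hα : α ∈ Set.Ioo (0 : ℝ) 1)
    {D : Set ℝ} (hD : Convex ℝ D) (hsin : ∀ y ∈ D, sin y ≠ 0) :
    StrictMonoOn (fun y => sin (y * α) * sin (y * (1 - α)) / sin y) D := by
  refine strictMonoOn_of_hasDerivWithinAt_pos hD
    (fun y hy => (hasDerivAt_sin_mul_sin_one_sub_div_sin α (hsin y hy)).continuousAt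
      |>.continuousWithinAt)
    (fun y hy => (hasDerivAt_sin_mul_sin_one_sub_div_sin α
      (hsin y (interior_subset hy))).hasDerivWithinAt) fun y hy => ?_
  have hy0 := hsin y (interior_subset hy)
  have hsum : sin (y * α) * cos (y * (1 - α)) + cos (y * α) * sin (y * (1 - α)) ≠ 0 := by
    rwa [← sin_add, ← mul_add, add_sub_cancel, mul_one]
  have := weighted_sq_add_sq_pos hα hsum
  positivity

theorem strictMonoOn_f_general
    (α : ℝ) (hα : α ∈ Set.Ioo (0:ℝ) 1) (k : ℕ) :
    StrictMonoOn (fun y => Real.sin (y * α) * Real.sin (y * (1 - α)) / Real.sin y)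
      (Set.Ioo (Real.pi * k) (Real.pi * (k + 1))) :=
  strictMonoOn_sin_mul_sin_one_sub_div_sin hα (convex_Ioo _ _) fun _ hy =>
    Real.sin_ne_zero_of_mem_Ioo_int_mul_pi k (by exact_mod_cast hy)

theorem strictMonoOn_f
    (α : ℝ) (hα : α ∈ Set.Ioo (0:ℝ) 1) (k : ℕ) (hk : 1 ≤ k)
    (hsin : Real.sin (Real.pi * k * α) ≠ 0) :
    StrictMonoOn (fun y => Real.sin (y * α) * Real.sin (y * (1 - α)) / Real.sin y)
      (Set.Ioo (Real.pi * k) (Real.pi * (k + 1))) :=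
  strictMonoOn_f_general α hα k
end

section
/- Let α ∈ (0,1), β > 0, and k ∈ ℕ with sin(πkα) ≠ 0. Then the equation -y/β = sin(yα)sin(y(1-α))/sin(y) has exactly one solution y* in the open interval (πk, π(k+1)). -/
/-!
Clearing denominators, the roots in `(πk, π(k+1))` are the zeros of
`H y = y sin y + β sin(yα) sin(y(1-α))`.

Existence: `(-1)^k H` equals `-β sin²(πkα) < 0` at `πk` and `β sin²(π(k+1)α) ≥ 0` at `π(k+1)`;
if the latter vanishes, both sines vanish at `b = π(k+1)`, so `((-1)^k H)'(b) = -b < 0` and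
`(-1)^k H` is positive just left of `b`.

Uniqueness: at a root `β (-1)^k sin(yα) sin(y(1-α)) = -y (-1)^k sin y < 0`. Between two roots the
product cannot vanish: a zero of one factor is the only one of that factor in the interval, the other
factor has none, so the product would change sign. There `H = y sin(yα) sin(y(1-α)) G` with
`G y = cot(yα) + cot(y(1-α)) + β/y` strictly decreasing, so `G` cannot vanish twice.
-/

open Real Set Filter Topology

lemma exists_lt_of_hasDerivAt_neg {f : ℝ → ℝ} {f' a b : ℝ} (hf : HasDerivAt f f' b)
    (hf' : f' < 0) (hab : a < b) : ∃ y ∈ Ioo a b, f b < f y := by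
  have hslope : Tendsto (slope f b) (𝓝[<] b) (𝓝 f') :=
    (hasDerivAt_iff_tendsto_slope.mp hf).mono_left (nhdsLT_le_nhdsNE b)
  obtain ⟨y, hy, hyI⟩ := ((hslope.eventually_lt_const hf').and (Ioo_mem_nhdsLT hab)).exists
  refine ⟨y, hyI, ?_⟩
  rw [slope_def_field] at hy
  have : y - b < 0 := by linarith [hyI.2]
  rcases div_neg_iff.mp hy with h | h <;> linarith [h.1, h.2]

lemma mul_pos_of_forall_ne_zero {f : ℝ → ℝ} {a b : ℝ} (hab : a ≤ b)
    (hf : ContinuousOn f (Icc a b)) (hne : ∀ x ∈ Icc a b, f x ≠ 0) : 0 < f a * f b := by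
  by_contra! hle
  have h0 : (0 : ℝ) ∈ uIcc (f a) (f b) := by
    rcases mul_nonpos_iff.mp hle with h | h
    · exact mem_uIcc.mpr (Or.inr ⟨h.2, h.1⟩)
    · exact mem_uIcc.mpr (Or.inl ⟨h.1, h.2⟩)
  obtain ⟨x, hx, hx0⟩ := intermediate_value_uIcc (by rwa [uIcc_of_le hab]) h0
  exact hne x (by rwa [uIcc_of_le hab] at hx) hx0

lemma sin_mul_sin_neg_of_sin_eq_zero {a b c : ℝ} (hc : sin c = 0) (hac : a < c) (hcb : c < b)
    (hba : b - a < π) : sin a * sin b < 0 := by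
  have ha : sin a = -cos c * sin (c - a) := by
    rw [show a = c - (c - a) by ring, sin_sub, hc]; ring_nf
  have hb : sin b = cos c * sin (b - c) := by
    rw [show b = c + (b - c) by ring, sin_add, hc]; ring_nf
  have hca : 0 < sin (c - a) := sin_pos_of_pos_of_lt_pi (by linarith) (by linarith)
  have hbc : 0 < sin (b - c) := sin_pos_of_pos_of_lt_pi (by linarith) (by linarith)
  have hcos : cos c ^ 2 = 1 := by nlinarith [sin_sq_add_cos_sq c]
  calc sin a * sin b = -(cos c ^ 2 * (sin (c - a) * sin (b - c))) := by rw [ha, hb]; ring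
    _ < 0 := by rw [hcos, one_mul, neg_lt_zero]; exact mul_pos hca hbc

lemma neg_one_pow_mul_sin_pos {k : ℕ} {y : ℝ} (hy : y ∈ Ioo (π * k) (π * (k + 1))) :
    0 < (-1) ^ k * sin y := by
  have hsin : sin y = (-1) ^ k * sin (y - k * π) := by
    rw [← sin_add_nat_mul_pi, sub_add_cancel]
  rw [hsin, ← mul_assoc, ← mul_pow]
  norm_num
  exact sin_pos_of_pos_of_lt_pi (by linarith [hy.1]) (by linarith [hy.2])

lemma hasDerivAt_cot_mul_const {a y : ℝ} (h : sin (y * a) ≠ 0) :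
    HasDerivAt (fun y => cot (y * a)) (-(a / sin (y * a) ^ 2)) y := by
  simp only [cot_eq_cos_div_sin]
  refine ((hasDerivAt_mul_const a).cos.div (hasDerivAt_mul_const a).sin h).congr_deriv ?_
  field_simp
  linear_combination (-a) * sin_sq_add_cos_sq (y * a)

lemma exists_int_btwn_of_sin_mul_eq_zero {a y : ℝ} {k : ℤ} (ha : 0 < a)
    (hy : y ∈ Ioo (π * k) (π * (k + 1))) (h : sin (y * a) = 0) :
    ∃ m : ℤ, k * a < m ∧ m < (k + 1) * a := by
  obtain ⟨m, hm⟩ := sin_eq_zero_iff.mp h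
  refine ⟨m, lt_of_mul_lt_mul_right ?_ pi_pos.le, lt_of_mul_lt_mul_right ?_ pi_pos.le⟩
  · rw [hm]; nlinarith [hy.1]
  · rw [hm]; nlinarith [hy.2]

/-- Zeros of both would give integers `m`, `n` with `k < m + n < k + 1`. -/
lemma sin_mul_one_sub_ne_zero {α y z : ℝ} {k : ℤ} (hα : α ∈ Ioo 0 1)
    (hy : y ∈ Ioo (π * k) (π * (k + 1))) (hz : z ∈ Ioo (π * k) (π * (k + 1)))
    (hyα : sin (y * α) = 0) : sin (z * (1 - α)) ≠ 0 := by
  intro hz0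
  obtain ⟨m, hm₁, hm₂⟩ := exists_int_btwn_of_sin_mul_eq_zero hα.1 hy hyα
  obtain ⟨n, hn₁, hn₂⟩ := exists_int_btwn_of_sin_mul_eq_zero (sub_pos.mpr hα.2) hz hz0
  have h₁ : k < m + n := by exact_mod_cast (show (k : ℝ) < m + n by linarith)
  have h₂ : m + n < k + 1 := by exact_mod_cast (show (m + n : ℝ) < k + 1 by linarith)
  omega

noncomputable def sinProd (α y : ℝ) : ℝ := sin (y * α) * sin (y * (1 - α))

lemma sinProd_one_sub (α y : ℝ) : sinProd (1 - α) y = sinProd α y := by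
  rw [sinProd, sinProd, sub_sub_cancel, mul_comm]

lemma sinProd_mul_sinProd_neg {α y₁ y₂ c : ℝ} {k : ℕ} (hα : α ∈ Ioo 0 1)
    (hy₁ : y₁ ∈ Ioo (π * k) (π * (k + 1))) (hy₂ : y₂ ∈ Ioo (π * k) (π * (k + 1)))
    (hc : c ∈ Ioo y₁ y₂) (hcα : sin (c * α) = 0) : sinProd α y₁ * sinProd α y₂ < 0 := by
  have hI : ∀ z ∈ Icc y₁ y₂, z ∈ Ioo (π * (k : ℤ)) (π * ((k : ℤ) + 1)) := fun z hz => by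
    push_cast; exact ⟨hy₁.1.trans_le hz.1, hz.2.trans_lt hy₂.2⟩
  have hs : sin (y₁ * α) * sin (y₂ * α) < 0 :=
    sin_mul_sin_neg_of_sin_eq_zero hcα (by nlinarith [hc.1, hα.1]) (by nlinarith [hc.2, hα.1])
      (by nlinarith [hy₁.1, hy₂.2, hc.1, hc.2, hα.1, hα.2])
  have ht : 0 < sin (y₁ * (1 - α)) * sin (y₂ * (1 - α)) :=
    mul_pos_of_forall_ne_zero (f := fun z => sin (z * (1 - α))) (hc.1.trans hc.2).le
      (by fun_prop) fun z hz =>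
      sin_mul_one_sub_ne_zero hα (hI c (Ioo_subset_Icc_self hc)) (hI z hz) hcα
  calc _ = sin (y₁ * α) * sin (y₂ * α) * (sin (y₁ * (1 - α)) * sin (y₂ * (1 - α))) := by
        rw [sinProd, sinProd]; ring
    _ < 0 := mul_neg_of_neg_of_pos hs ht

lemma sinProd_ne_zero_of_mul_pos {α y₁ y₂ c : ℝ} {k : ℕ} (hα : α ∈ Ioo 0 1)
    (hy₁ : y₁ ∈ Ioo (π * k) (π * (k + 1))) (hy₂ : y₂ ∈ Ioo (π * k) (π * (k + 1)))
    (hpos : 0 < sinProd α y₁ * sinProd α y₂) (hc : c ∈ Icc y₁ y₂) : sinProd α c ≠ 0 := by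
  intro hc0
  rcases hc.1.eq_or_lt with rfl | hc₁
  · simp [hc0] at hpos
  rcases hc.2.eq_or_lt with rfl | hc₂
  · simp [hc0] at hpos
  rcases mul_eq_zero.mp hc0 with h | h
  · linarith [sinProd_mul_sinProd_neg hα hy₁ hy₂ ⟨hc₁, hc₂⟩ h]
  · have hα' : 1 - α ∈ Ioo 0 1 := ⟨sub_pos.mpr hα.2, by linarith [hα.1]⟩
    have := sinProd_mul_sinProd_neg hα' hy₁ hy₂ ⟨hc₁, hc₂⟩ h
    rw [sinProd_one_sub, sinProd_one_sub] at this
    linarith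

lemma strictAntiOn_cot_add_cot_add_div {α β : ℝ} {s : Set ℝ} (hs : Convex ℝ s)
    (hα : α ∈ Icc 0 1) (hβ : 0 < β)
    (hne : ∀ y ∈ s, y ≠ 0 ∧ sin (y * α) ≠ 0 ∧ sin (y * (1 - α)) ≠ 0) :
    StrictAntiOn (fun y => cot (y * α) + cot (y * (1 - α)) + β / y) s := by
  have hderiv : ∀ y ∈ s, HasDerivAt (fun y => cot (y * α) + cot (y * (1 - α)) + β / y)
      (-(α / sin (y * α) ^ 2) + -((1 - α) / sin (y * (1 - α)) ^ 2) + -(β / y ^ 2)) y := by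
    intro y hy
    obtain ⟨hy0, hα', hα''⟩ := hne y hy
    refine (((hasDerivAt_cot_mul_const hα').add (hasDerivAt_cot_mul_const hα'')).add
      ((hasDerivAt_const y β).div (hasDerivAt_id' y) hy0)).congr_deriv ?_
    ring
  refine strictAntiOn_of_deriv_neg hs (fun y hy => (hderiv y hy).continuousAt.continuousWithinAt)
    fun y hy => ?_
  have hy := interior_subset hy
  obtain ⟨hy0, -, -⟩ := hne y hy
  rw [(hderiv y hy).deriv]
  have : 0 ≤ α / sin (y * α) ^ 2 := div_nonneg hα.1 (sq_nonneg _)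
  have : 0 ≤ (1 - α) / sin (y * (1 - α)) ^ 2 := div_nonneg (sub_nonneg.mpr hα.2) (sq_nonneg _)
  have : 0 < β / y ^ 2 := by positivity
  linarith

noncomputable def rootFun (α β y : ℝ) : ℝ := y * sin y + β * sinProd α y

lemma div_eq_sinProd_div_sin_iff {α β y : ℝ} (hβ : β ≠ 0) (hy : sin y ≠ 0) :
    -y / β = sinProd α y / sin y ↔ rootFun α β y = 0 := by
  rw [div_eq_div_iff hβ hy, rootFun]
  constructor <;> intro h <;> linear_combination -h

lemma sin_pi_mul_natCast_mul_one_sub (α : ℝ) (n : ℕ) :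
    sin (π * n * (1 - α)) = -((-1) ^ n * sin (π * n * α)) := by
  rw [show π * n * (1 - α) = n * π - π * n * α by ring, sin_sub, sin_nat_mul_pi, cos_nat_mul_pi]
  ring

lemma rootFun_pi_mul_natCast (α β : ℝ) (n : ℕ) :
    rootFun α β (π * n) = -((-1) ^ n * β * sin (π * n * α) ^ 2) := by
  rw [rootFun, sinProd, sin_pi_mul_natCast_mul_one_sub, mul_comm π, sin_nat_mul_pi]
  ring

lemma hasDerivAt_rootFun (α β y : ℝ) :
    HasDerivAt (rootFun α β) (sin y + y * cos y + β * (cos (y * α) * α * sin (y * (1 - α)) +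
      sin (y * α) * (cos (y * (1 - α)) * (1 - α)))) y := by
  have hsin (a : ℝ) : HasDerivAt (fun y => sin (y * a)) (cos (y * a) * a) y :=
    (hasDerivAt_mul_const a).sin
  refine (((hasDerivAt_id' y).mul (Real.hasDerivAt_sin y)).add
    (((hsin α).mul (hsin (1 - α))).const_mul β)).congr_deriv ?_
  ring

lemma continuous_rootFun (α β : ℝ) : Continuous (rootFun α β) :=
  continuous_iff_continuousAt.mpr fun y => (hasDerivAt_rootFun α β y).continuousAt

lemma exists_rootFun_eq_zero {α β : ℝ} (hβ : 0 < β) (k : ℕ)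
    (hsin : sin (π * k * α) ≠ 0) : ∃ y ∈ Ioo (π * k) (π * (k + 1)), rootFun α β y = 0 := by
  set h := fun y => (-1) ^ k * rootFun α β y with hh
  have hpow : (-1 : ℝ) ^ k * (-1) ^ (k + 1) = -1 := by
    rw [← pow_add, show k + (k + 1) = 2 * k + 1 by ring, pow_succ, pow_mul]; norm_num
  have hleft : h (π * k) < 0 := by
    have hsq : (-1 : ℝ) ^ k * (-1) ^ k = 1 := by rw [← mul_pow]; norm_num
    have : h (π * k) = -(β * sin (π * k * α) ^ 2) := by
      simp only [hh, rootFun_pi_mul_natCast]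
      linear_combination (-(β * sin (π * k * α) ^ 2)) * hsq
    rw [this, neg_lt_zero]
    positivity
  set b := π * (k + 1)
  have hbn : b = π * ((k + 1 : ℕ) : ℝ) := by push_cast; rfl
  have hab : π * k < b := by nlinarith [pi_pos]
  have hright : h b = β * sin (b * α) ^ 2 := by
    simp only [hh]
    rw [hbn, rootFun_pi_mul_natCast]
    linear_combination (-(β * sin (π * ((k + 1 : ℕ) : ℝ) * α) ^ 2)) * hpow
  obtain ⟨y₀, hy₀, hpos⟩ : ∃ y₀ ∈ Ioc (π * k) b, 0 < h y₀ := by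
    by_cases hbα : sin (b * α) = 0
    · have hderiv : HasDerivAt h (-b) b := by
        refine ((hasDerivAt_rootFun α β b).const_mul ((-1 : ℝ) ^ k)).congr_deriv ?_
        have hsinb : sin b = 0 := by rw [hbn, mul_comm]; exact sin_nat_mul_pi _
        have hcosb : cos b = (-1) ^ (k + 1) := by rw [hbn, mul_comm]; exact cos_nat_mul_pi _
        have hbα' : sin (b * (1 - α)) = 0 := by
          rw [hbn, sin_pi_mul_natCast_mul_one_sub, ← hbn, hbα, mul_zero, neg_zero]
        rw [hsinb, hcosb, hbα, hbα']
        linear_combination b * hpow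
      obtain ⟨y₀, hy₀, hlt⟩ := exists_lt_of_hasDerivAt_neg hderiv (by nlinarith [pi_pos]) hab
      exact ⟨y₀, Ioo_subset_Ioc_self hy₀, by simpa [hright, hbα] using hlt⟩
    · exact ⟨b, ⟨hab, le_rfl⟩, by rw [hright]; positivity⟩
  obtain ⟨y, hy, hy0⟩ := intermediate_value_Ioo hy₀.1.le
    ((continuous_rootFun α β).const_mul _).continuousOn ⟨hleft, hpos⟩
  exact ⟨y, ⟨hy.1, hy.2.trans_le hy₀.2⟩, (mul_eq_zero.mp hy0).resolve_left (by positivity)⟩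

lemma neg_one_pow_mul_sinProd_neg {α β y : ℝ} {k : ℕ} (hβ : 0 < β)
    (hy : y ∈ Ioo (π * k) (π * (k + 1))) (hroot : rootFun α β y = 0) :
    (-1) ^ k * sinProd α y < 0 := by
  have hy0 : 0 < y := lt_of_le_of_lt (by positivity) hy.1
  have hsin := neg_one_pow_mul_sin_pos hy
  have : β * ((-1) ^ k * sinProd α y) = -(y * ((-1) ^ k * sin y)) := by
    rw [rootFun] at hroot; linear_combination (-1) ^ k * hroot
  nlinarith [mul_pos hy0 hsin]

lemma rootFun_eq_mul_cot_add_cot_add_div {α β y : ℝ} (hy : y ≠ 0) (hα : sin (y * α) ≠ 0)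
    (hα' : sin (y * (1 - α)) ≠ 0) :
    rootFun α β y = y * sinProd α y * (cot (y * α) + cot (y * (1 - α)) + β / y) := by
  have hsin : sin y = sin (y * α + y * (1 - α)) := by ring_nf
  rw [rootFun, sinProd, hsin, sin_add, cot_eq_cos_div_sin, cot_eq_cos_div_sin]
  field_simp
  ring

lemma eq_of_rootFun_eq_zero {α β y₁ y₂ : ℝ} {k : ℕ} (hα : α ∈ Ioo 0 1) (hβ : 0 < β)
    (hy₁ : y₁ ∈ Ioo (π * k) (π * (k + 1))) (hy₂ : y₂ ∈ Ioo (π * k) (π * (k + 1)))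
    (h₁ : rootFun α β y₁ = 0) (h₂ : rootFun α β y₂ = 0) : y₁ = y₂ := by
  wlog hlt : y₁ < y₂ generalizing y₁ y₂
  · rcases (not_lt.mp hlt).eq_or_lt with h | h
    · exact h.symm
    · exact (this hy₂ hy₁ h₂ h₁ h).symm
  have hpos : 0 < sinProd α y₁ * sinProd α y₂ := by
    have hsq : ((-1 : ℝ) ^ k) ^ 2 = 1 := by rw [← pow_mul, mul_comm, pow_mul]; norm_num
    have := mul_pos_of_neg_of_neg (neg_one_pow_mul_sinProd_neg hβ hy₁ h₁)
      (neg_one_pow_mul_sinProd_neg hβ hy₂ h₂)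
    linear_combination this + (sinProd α y₁ * sinProd α y₂) * hsq
  have hne : ∀ y ∈ Icc y₁ y₂, y ≠ 0 ∧ sin (y * α) ≠ 0 ∧ sin (y * (1 - α)) ≠ 0 := by
    intro y hy
    obtain ⟨hα', hα''⟩ := mul_ne_zero_iff.mp (sinProd_ne_zero_of_mul_pos hα hy₁ hy₂ hpos hy)
    exact ⟨(lt_of_le_of_lt (by positivity) (hy₁.1.trans_le hy.1)).ne', hα', hα''⟩
  have hzero : ∀ y ∈ Icc y₁ y₂, rootFun α β y = 0 →
      cot (y * α) + cot (y * (1 - α)) + β / y = 0 := by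
    intro y hy hroot
    obtain ⟨hy0, hα', hα''⟩ := hne y hy
    rw [rootFun_eq_mul_cot_add_cot_add_div hy0 hα' hα''] at hroot
    exact (mul_eq_zero.mp hroot).resolve_left (mul_ne_zero hy0 (mul_ne_zero hα' hα''))
  have := strictAntiOn_cot_add_cot_add_div (convex_Icc y₁ y₂) (Ioo_subset_Icc_self hα) hβ hne
    (left_mem_Icc.mpr hlt.le) (right_mem_Icc.mpr hlt.le) hlt
  simp only [hzero y₁ (left_mem_Icc.mpr hlt.le) h₁, hzero y₂ (right_mem_Icc.mpr hlt.le) h₂] at this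
  exact absurd this (lt_irrefl 0)

theorem exists_unique_root_case2_general
    (α β : ℝ) (hα : α ∈ Set.Ioo (0:ℝ) 1) (hβ : 0 < β) (k : ℕ)
    (hsin : Real.sin (Real.pi * k * α) ≠ 0) :
    ∃! y : ℝ, y ∈ Set.Ioo (Real.pi * k) (Real.pi * (k + 1)) ∧
      -y / β = Real.sin (y * α) * Real.sin (y * (1 - α)) / Real.sin y := by
  have hiff : ∀ y ∈ Ioo (π * k) (π * (k + 1)),
      -y / β = sinProd α y / sin y ↔ rootFun α β y = 0 := fun y hy =>
    div_eq_sinProd_div_sin_iff hβ.ne' (right_ne_zero_of_mul (neg_one_pow_mul_sin_pos hy).ne')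
  obtain ⟨y, hy, hroot⟩ := exists_rootFun_eq_zero hβ k hsin
  exact ⟨y, ⟨hy, (hiff y hy).mpr hroot⟩, fun z ⟨hz, hzeq⟩ =>
    eq_of_rootFun_eq_zero hα hβ hz hy ((hiff z hz).mp hzeq) hroot⟩

theorem exists_unique_root_case2
    (α β : ℝ) (hα : α ∈ Set.Ioo (0:ℝ) 1) (hβ : 0 < β) (k : ℕ) (hk : 1 ≤ k)
    (hsin : Real.sin (Real.pi * k * α) ≠ 0) :
    ∃! y : ℝ, y ∈ Set.Ioo (Real.pi * k) (Real.pi * (k + 1)) ∧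
      -y / β = Real.sin (y * α) * Real.sin (y * (1 - α)) / Real.sin y :=
  exists_unique_root_case2_general α β hα hβ k hsin
end

section
/- Let α ∈ (0,1), β > 0, and k ∈ ℕ with sin(πkα) = 0. Then the equation -y/β = sin(yα)sin(y(1-α))/sin(y) has no solution y in the open interval (πk, π(k+1)). -/
/-! On `(πk, π(k+1))` the ratio `sin (yα) sin (y(1-α)) / sin y` is positive: the hypothesis makes
`kα` an integer `m`, so shifting `y` by `kπ` changes the three sines by the signs `(-1)^m`,
`(-1)^(k-m)` and `(-1)^k`, which cancel, and on `(0, π)` all three sines are positive.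
The left-hand side `-y/β` is negative, so the two sides never meet. -/

open Real

theorem sin_mul_sin_one_sub_mul_div_sin_pos {α t : ℝ} (hα : α ∈ Set.Ioo (0 : ℝ) 1)
    (ht : t ∈ Set.Ioo 0 π) : 0 < sin (t * α) * sin (t * (1 - α)) / sin t := by
  obtain ⟨hα0, hα1⟩ := hα
  obtain ⟨ht0, htπ⟩ := ht
  have hsinα : 0 < sin (t * α) := sin_pos_of_pos_of_lt_pi (by positivity) (by nlinarith)
  have hsinα' : 0 < sin (t * (1 - α)) := sin_pos_of_pos_of_lt_pi (by nlinarith) (by nlinarith)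
  have hsin : 0 < sin t := sin_pos_of_pos_of_lt_pi ht0 htπ
  positivity

theorem sin_mul_sin_one_sub_mul_div_sin_add_int_mul_pi {α : ℝ} {k m : ℤ} (hkα : k * α = m)
    (t : ℝ) :
    sin ((t + k * π) * α) * sin ((t + k * π) * (1 - α)) / sin (t + k * π) =
      sin (t * α) * sin (t * (1 - α)) / sin t := by
  have hα : (t + k * π) * α = t * α + m * π := by rw [← hkα]; ring
  have hα' : (t + k * π) * (1 - α) = t * (1 - α) + ((k - m : ℤ) : ℝ) * π := by
    push_cast; rw [← hkα]; ring
  have hsign : ((-1 : ℝ) ^ m * (-1) ^ (k - m)) = (-1) ^ k := by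
    rw [← zpow_add₀ (by norm_num)]; ring_nf
  rw [hα, hα', sin_add_int_mul_pi, sin_add_int_mul_pi, sin_add_int_mul_pi,
    mul_mul_mul_comm, hsign, mul_div_mul_left _ _ (zpow_ne_zero _ (by norm_num))]

theorem no_root_case1_general
    (α β : ℝ) (hα : α ∈ Set.Ioo (0:ℝ) 1) (hβ : 0 < β) (k : ℕ)
    (hsin : Real.sin (Real.pi * k * α) = 0) :
    ∀ y ∈ Set.Ioo (Real.pi * k) (Real.pi * (k + 1)),
      -y / β ≠ Real.sin (y * α) * Real.sin (y * (1 - α)) / Real.sin y := by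
  rintro y ⟨hky, hyk⟩
  obtain ⟨m, hm⟩ := sin_eq_zero_iff.1 hsin
  have hkα : ((k : ℤ) : ℝ) * α = m := by
    push_cast
    exact mul_left_cancel₀ pi_ne_zero (by linarith)
  have hy : y = (y - π * k) + ((k : ℤ) : ℝ) * π := by push_cast; ring
  have hpos : 0 < sin (y * α) * sin (y * (1 - α)) / sin y := by
    rw [hy, sin_mul_sin_one_sub_mul_div_sin_add_int_mul_pi hkα]
    exact sin_mul_sin_one_sub_mul_div_sin_pos hα ⟨by linarith, by linarith⟩
  have hneg : -y / β < 0 :=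
    div_neg_of_neg_of_pos (by linarith [mul_nonneg pi_pos.le k.cast_nonneg]) hβ
  exact (hneg.trans hpos).ne

theorem no_root_case1
    (α β : ℝ) (hα : α ∈ Set.Ioo (0:ℝ) 1) (hβ : 0 < β) (k : ℕ) (hk : 1 ≤ k)
    (hsin : Real.sin (Real.pi * k * α) = 0) :
    ∀ y ∈ Set.Ioo (Real.pi * k) (Real.pi * (k + 1)),
      -y / β ≠ Real.sin (y * α) * Real.sin (y * (1 - α)) / Real.sin y :=
  no_root_case1_general α β hα hβ k hsin
end

section
/- Let λ₀ > 0, α ∈ (0,1), β ≥ 0, c₀ ∈ ℝ satisfy the matching equations of the basic problem, and let u₀(x) = sin(√λ₀ x)/√λ₀ for x ∈ [0,α] and u₀(x) = c₀ sin(√λ₀(1-x)) for x ∈ (α,1]. Then ∫₀¹ u₀(x)² dx = (1/2)·(α/λ₀ + c₀²(1-α) + β·sin²(√λ₀α)/λ₀²). -/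
/-!
On each piece `u₀²` is a squared sine, whose integral is `(length)/2` minus a boundary term
`sin·cos/(2√λ₀)`. The two matching conditions at `α` turn the sum of the two boundary terms into
`β sin²(√λ₀ α) / (2λ₀²)`.
-/

open Real MeasureTheory Set intervalIntegral
open scoped Interval

theorem integral_ite_le_eq_add {E : Type*} [NormedAddCommGroup E] [NormedSpace ℝ E]
    {μ : Measure ℝ} {f g : ℝ → E} {a b c : ℝ} (hab : a ≤ b) (hbc : b ≤ c)
    (hf : IntervalIntegrable f μ a b) (hg : IntervalIntegrable g μ b c) :
    ∫ x in a..c, (if x ≤ b then f x else g x) ∂μ = (∫ x in a..b, f x ∂μ) + ∫ x in b..c, g x ∂μ := by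
  have hf_eq : EqOn f (fun x ↦ if x ≤ b then f x else g x) (Ι a b) := fun x hx ↦ by
    rw [uIoc_of_le hab] at hx
    simp [hx.2]
  have hg_eq : EqOn g (fun x ↦ if x ≤ b then f x else g x) (Ι b c) := fun x hx ↦ by
    rw [uIoc_of_le hbc] at hx
    simp [not_le.mpr hx.1]
  rw [← integral_add_adjacent_intervals (hf.congr hf_eq) (hg.congr hg_eq),
    integral_congr_ae (ae_of_all _ fun x hx ↦ (hf_eq hx).symm),
    integral_congr_ae (ae_of_all _ fun x hx ↦ (hg_eq hx).symm)]

theorem integral_sin_mul_sq {s : ℝ} (hs : s ≠ 0) (a b : ℝ) :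
    ∫ x in a..b, sin (s * x) ^ 2 =
      (b - a) / 2 - (sin (s * b) * cos (s * b) - sin (s * a) * cos (s * a)) / (2 * s) := by
  rw [integral_comp_mul_left (fun y ↦ sin y ^ 2) hs, integral_sin_sq, smul_eq_mul]
  field_simp
  ring

theorem sq_mul_sin_mul_cos_eq_of_matching {s α β c : ℝ} (hs : s ≠ 0)
    (h1 : sin (s * α) / s = c * sin (s * (1 - α)))
    (h2 : -c * s * cos (s * (1 - α)) - cos (s * α) = β * sin (s * α) / s) :
    s ^ 3 * (c ^ 2 * (sin (s * (1 - α)) * cos (s * (1 - α)))) =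
      -(s * (sin (s * α) * cos (s * α))) - β * sin (s * α) ^ 2 := by
  have h1' : sin (s * α) = s * (c * sin (s * (1 - α))) := by
    field_simp at h1
    linarith
  have h2' : (-(c * s * cos (s * (1 - α))) - cos (s * α)) * s = β * sin (s * α) := by
    field_simp at h2
    linarith
  linear_combination (-(c * s ^ 2 * cos (s * (1 - α)))) * h1' - sin (s * α) * h2'

theorem norm_sq_of_basic_eigenfunction_general
    (lam0 α β c0 : ℝ) (hlam : 0 < lam0) (hα : α ∈ Set.Ioo (0:ℝ) 1)
    (h1 : Real.sin (Real.sqrt lam0 * α) / Real.sqrt lam0 =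
      c0 * Real.sin (Real.sqrt lam0 * (1 - α)))
    (h2 : -c0 * Real.sqrt lam0 * Real.cos (Real.sqrt lam0 * (1 - α)) -
        Real.cos (Real.sqrt lam0 * α) =
      β * Real.sin (Real.sqrt lam0 * α) / Real.sqrt lam0)
    (u0 : ℝ → ℝ)
    (hu0 : ∀ x, u0 x = if x ≤ α then Real.sin (Real.sqrt lam0 * x) / Real.sqrt lam0
      else c0 * Real.sin (Real.sqrt lam0 * (1 - x))) :
    ∫ x in (0:ℝ)..1, (u0 x)^2 =
      (1/2) * (α / lam0 + c0^2 * (1 - α) +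
        β * (Real.sin (Real.sqrt lam0 * α))^2 / lam0^2) := by
  set s := √lam0
  have hs : s ≠ 0 := (sqrt_pos.mpr hlam).ne'
  have hlam_eq : lam0 = s ^ 2 := (sq_sqrt hlam.le).symm
  have hu0_sq : (fun x ↦ u0 x ^ 2) =
      fun x ↦ if x ≤ α then (sin (s * x) / s) ^ 2 else (c0 * sin (s * (1 - x))) ^ 2 :=
    funext fun x ↦ by rw [hu0, apply_ite (· ^ 2)]
  have hleft : ∫ x in (0:ℝ)..α, (sin (s * x) / s) ^ 2 =
      (α / 2 - sin (s * α) * cos (s * α) / (2 * s)) / s ^ 2 := by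
    simp_rw [div_pow]
    rw [intervalIntegral.integral_div, integral_sin_mul_sq hs]
    simp
  have hright : ∫ x in α..1, (c0 * sin (s * (1 - x))) ^ 2 =
      c0 ^ 2 * ((1 - α) / 2 - sin (s * (1 - α)) * cos (s * (1 - α)) / (2 * s)) := by
    simp_rw [mul_pow]
    rw [intervalIntegral.integral_const_mul,
      integral_comp_sub_left (fun x ↦ sin (s * x) ^ 2), integral_sin_mul_sq hs]
    simp
  rw [hu0_sq, integral_ite_le_eq_add hα.1.le hα.2.le
    (Continuous.intervalIntegrable (by fun_prop) _ _)
    (Continuous.intervalIntegrable (by fun_prop) _ _), hleft, hright]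
  have hboundary := sq_mul_sin_mul_cos_eq_of_matching hs h1 h2
  rw [hlam_eq]
  -- atomize the trigonometric values, or `field_simp` rewrites `s * α` inside some of them
  set A := sin (s * α)
  set B := cos (s * α)
  set C := sin (s * (1 - α))
  set D := cos (s * (1 - α))
  field_simp
  linear_combination -hboundary

theorem norm_sq_of_basic_eigenfunction
    (lam0 α β c0 : ℝ) (hlam : 0 < lam0) (hα : α ∈ Set.Ioo (0:ℝ) 1) (hβ : 0 ≤ β)
    (h1 : Real.sin (Real.sqrt lam0 * α) / Real.sqrt lam0 =
      c0 * Real.sin (Real.sqrt lam0 * (1 - α)))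
    (h2 : -c0 * Real.sqrt lam0 * Real.cos (Real.sqrt lam0 * (1 - α)) -
        Real.cos (Real.sqrt lam0 * α) =
      β * Real.sin (Real.sqrt lam0 * α) / Real.sqrt lam0)
    (u0 : ℝ → ℝ)
    (hu0 : ∀ x, u0 x = if x ≤ α then Real.sin (Real.sqrt lam0 * x) / Real.sqrt lam0
      else c0 * Real.sin (Real.sqrt lam0 * (1 - x))) :
    ∫ x in (0:ℝ)..1, (u0 x)^2 =
      (1/2) * (α / lam0 + c0^2 * (1 - α) +
        β * (Real.sin (Real.sqrt lam0 * α))^2 / lam0^2) :=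
  norm_sq_of_basic_eigenfunction_general lam0 α β c0 hlam hα h1 h2 u0 hu0
end

section
/- For every integer j ≥ 2, the coefficient αⱼ = (2j-3)!!/(2·(2j)!!) satisfies αⱼ < e^{1/(24j)}/(2(2j-1)√(πj)) ≤ 1/((2j-1)√(πj)). -/
/-!
Since `(2j-1)‼ / (2j)‼ = C(2j, j) / 4^j`, the coefficient is `αⱼ = C(2j, j) / (2 (2j-1) 4^j)`.
The lower Wallis bound `W n ≥ (2n+1)/(2n+2) · π/2` gives `C(2n, n) √(πn) < 4^n`, so `αⱼ` lies
below the bound even without the factor `e^{1/(24j)}`; the second inequality is `e^{1/(24j)} ≤ 2`.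
-/

open Real Nat

theorem Nat.centralBinom_mul_factorial_mul_factorial (n : ℕ) :
    n.centralBinom * n ! * n ! = (2 * n)! := by
  simpa [Nat.centralBinom, two_mul] using
    Nat.choose_mul_factorial_mul_factorial (Nat.le_add_left n n)

theorem Nat.centralBinom_mul_factorial (n : ℕ) :
    n.centralBinom * n ! = 2 ^ n * (2 * n - 1)‼ := by
  rcases n with _ | m
  · rfl
  · apply Nat.eq_of_mul_eq_mul_right (Nat.factorial_pos (m + 1))
    rw [Nat.centralBinom_mul_factorial_mul_factorial, show 2 * (m + 1) - 1 = 2 * m + 1 by omega,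
      show 2 * (m + 1) = 2 * m + 1 + 1 by omega, Nat.factorial_eq_mul_doubleFactorial,
      show 2 * m + 1 + 1 = 2 * (m + 1) by omega, Nat.doubleFactorial_two_mul]
    ring

theorem Nat.centralBinom_mul_doubleFactorial (n : ℕ) :
    n.centralBinom * (2 * n)‼ = 4 ^ n * (2 * n - 1)‼ := by
  rw [Nat.doubleFactorial_two_mul, mul_left_comm, Nat.centralBinom_mul_factorial, ← mul_assoc,
    ← mul_pow]
  rfl

theorem Nat.doubleFactorial_two_mul_sub_one {n : ℕ} (hn : 1 ≤ n) :
    (2 * n - 1)‼ = (2 * n - 1) * (2 * n - 3)‼ := by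
  obtain ⟨m, rfl⟩ := Nat.exists_eq_add_of_le' hn
  rw [show 2 * (m + 1) - 1 = 2 * m + 1 by omega, show 2 * (m + 1) - 3 = 2 * m - 1 by omega]
  exact Nat.doubleFactorial_add_one (2 * m)

theorem Real.Wallis.W_eq_centralBinom (n : ℕ) :
    Wallis.W n = 16 ^ n / ((n.centralBinom : ℝ) ^ 2 * (2 * n + 1)) := by
  rw [Wallis.W_eq_factorial_ratio, ← Nat.centralBinom_mul_factorial_mul_factorial, pow_mul]
  have : (n ! : ℝ) ≠ 0 := by positivity
  push_cast
  field_simp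
  norm_num

theorem Nat.centralBinom_sq_mul_pi_lt (n : ℕ) :
    (n.centralBinom : ℝ) ^ 2 * (π * n) < 16 ^ n := by
  have := Nat.centralBinom_pos n
  calc (n.centralBinom : ℝ) ^ 2 * (π * n) = n.centralBinom ^ 2 * π * n := by ring
    _ < n.centralBinom ^ 2 * π * ((2 * n + 1) ^ 2 / (4 * n + 4)) := by
      gcongr
      rw [lt_div_iff₀ (by positivity)]
      nlinarith
    _ = (2 * n + 1) / (2 * n + 2) * (π / 2) * (n.centralBinom ^ 2 * (2 * n + 1)) := by
      field_simp
      ring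
    _ ≤ 16 ^ n := by
      have h := Wallis.le_W n
      rwa [Wallis.W_eq_centralBinom, le_div_iff₀ (by positivity)] at h

theorem Nat.centralBinom_mul_sqrt_pi_lt (n : ℕ) :
    (n.centralBinom : ℝ) * √(π * n) < 4 ^ n := by
  refine lt_of_pow_lt_pow_left₀ 2 (by positivity) ?_
  rw [mul_pow, sq_sqrt (by positivity), ← pow_mul, pow_mul']
  norm_num
  exact Nat.centralBinom_sq_mul_pi_lt n

theorem Real.exp_le_two_of_le_half {x : ℝ} (hx : x ≤ 1 / 2) : exp x ≤ 2 := by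
  calc exp x ≤ exp (log 2) := exp_le_exp.mpr (by linarith [log_two_gt_d9])
    _ = 2 := exp_log two_pos

theorem doubleFactorial_div_eq_centralBinom {j : ℕ} (hj : 1 ≤ j) :
    ((2 * j - 3)‼ : ℝ) / (2 * (2 * j)‼) = j.centralBinom / (2 * (2 * j - 1) * 4 ^ j) := by
  have hodd : ((2 * j - 1)‼ : ℝ) = (2 * j - 1) * (2 * j - 3)‼ := by
    rw [Nat.doubleFactorial_two_mul_sub_one hj]
    push_cast [Nat.cast_sub (by omega : 1 ≤ 2 * j)]
    ring
  have hcb : (j.centralBinom : ℝ) * (2 * j)‼ = 4 ^ j * (2 * j - 1)‼ := by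
    exact_mod_cast Nat.centralBinom_mul_doubleFactorial j
  have : (0 : ℝ) < 2 * j - 1 := by
    have : (1 : ℝ) ≤ j := by exact_mod_cast hj
    linarith
  have := Nat.doubleFactorial_pos (2 * j)
  rw [div_eq_div_iff (by positivity) (by positivity)]
  linear_combination (-2) * hcb - 2 * 4 ^ j * hodd

theorem alpha_j_stirling_bound (j : ℕ) (hj : 2 ≤ j) :
    ((2 * j - 3)‼ : ℝ) / (2 * (2 * j)‼) <
      Real.exp (1 / (24 * j)) / (2 * (2 * j - 1) * Real.sqrt (Real.pi * j)) ∧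
    Real.exp (1 / (24 * j)) / (2 * (2 * j - 1) * Real.sqrt (Real.pi * j)) ≤
      1 / ((2 * j - 1) * Real.sqrt (Real.pi * j)) := by
  have hj1 : (1 : ℝ) ≤ j := by exact_mod_cast (by omega : 1 ≤ j)
  have hodd : (0 : ℝ) < 2 * j - 1 := by linarith
  have hsqrt : 0 < √(π * j) := by positivity
  constructor
  · calc ((2 * j - 3)‼ : ℝ) / (2 * (2 * j)‼)
        = j.centralBinom / (2 * (2 * j - 1) * 4 ^ j) :=
          doubleFactorial_div_eq_centralBinom (by omega)
      _ < 1 / (2 * (2 * j - 1) * √(π * j)) := by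
        rw [div_lt_div_iff₀ (by positivity) (by positivity)]
        nlinarith [Nat.centralBinom_mul_sqrt_pi_lt j]
      _ ≤ exp (1 / (24 * j)) / (2 * (2 * j - 1) * √(π * j)) := by
        gcongr
        exact one_le_exp (by positivity)
  · rw [mul_assoc, ← div_div]
    gcongr
    rw [div_le_one two_pos]
    exact exp_le_two_of_le_half (by rw [div_le_div_iff₀ (by positivity) two_pos]; linarith)
end
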